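/- The minimal polynomial of c_1 over F_p equals X^(p²) + (X^p - X - 1)^(p-1) - X^p - 2; in particular, this polynomial is irreducible in F_p[X]. -/
import Mathlib
open Polynomial IntermediateField Finset

section aux
variable (p : ℕ) [Fact p.Prime]

local notation "K" => AlgebraicClosure (ZMod p)

lemma pow_pow_natDegree_minpoly (x : K) :
    x ^ p ^ (minpoly (ZMod p) x).natDegree = x := by
  have hint : IsIntegral (ZMod p) x := (Algebra.IsAlgebraic.isAlgebraic x).isIntegral
  haveI : FiniteDimensional (ZMod p) (ZMod p)⟮x⟯ := adjoin.finiteDimensional hint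
  haveI : Finite (ZMod p)⟮x⟯ := Module.finite_of_finite (ZMod p)
  haveI : Fintype (ZMod p)⟮x⟯ := Fintype.ofFinite _
  have hcard : Fintype.card (ZMod p)⟮x⟯ = p ^ (minpoly (ZMod p) x).natDegree := by
    have h : Fintype.card (ZMod p)⟮x⟯ =
        Fintype.card (ZMod p) ^ Module.finrank (ZMod p) (ZMod p)⟮x⟯ := Module.card_eq_pow_finrank
    rwa [ZMod.card, adjoin.finrank hint] at h
  have hgen := FiniteField.pow_card (AdjoinSimple.gen (ZMod p) x)
  rw [hcard] at hgen
  have := congrArg (algebraMap (ZMod p)⟮x⟯ K) hgen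
  rwa [map_pow, AdjoinSimple.algebraMap_gen] at this

lemma natCast_pow_card (k : ℕ) : ((k : K)) ^ p = (k : K) := by
  have hk : ((k : K)) = algebraMap (ZMod p) K (k : ZMod p) := (map_natCast _ k).symm
  rw [hk, ← map_pow, ZMod.pow_card]

lemma ndeg_AS : (X ^ p - X - 1 : (ZMod p)[X]).natDegree = p := by
  have hp2 : 2 ≤ p := (Fact.out : p.Prime).two_le
  have h : (X ^ p - X - 1 : (ZMod p)[X]) = X ^ p - (X + C 1) := by
    rw [map_one]; ring
  have hdeg : (X ^ p - X - 1 : (ZMod p)[X]).degree = p := by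
    rw [h, degree_sub_eq_left_of_degree_lt, degree_X_pow]
    rw [degree_X_pow, degree_X_add_C (1 : ZMod p)]
    exact_mod_cast Nat.one_lt_cast.mpr (by omega)
  exact natDegree_eq_of_degree_eq_some hdeg

lemma AS_ne_zero : (X ^ p - X - 1 : (ZMod p)[X]) ≠ 0 := by
  intro h
  have := ndeg_AS p
  rw [h, natDegree_zero] at this
  exact ((Fact.out : p.Prime).two_le).not_gt (by omega)

lemma c0_pow (c₀ : K) (h0 : c₀ ^ p - c₀ = 1) : c₀ ^ p = c₀ + 1 := by linear_combination h0

lemma c0_pow_pow (c₀ : K) (h0 : c₀ ^ p - c₀ = 1) (k : ℕ) : c₀ ^ p ^ k = c₀ + k := by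
  induction k with
  | zero => simp
  | succ k ih =>
    rw [pow_succ, pow_mul, ih, add_pow_char, c0_pow p c₀ h0, natCast_pow_card]
    push_cast
    ring

lemma minpoly_c0_natDegree (c₀ : K) (h0 : c₀ ^ p - c₀ = 1) :
    (minpoly (ZMod p) c₀).natDegree = p := by
  have hp2 : 2 ≤ p := (Fact.out : p.Prime).two_le
  have hint : IsIntegral (ZMod p) c₀ := (Algebra.IsAlgebraic.isAlgebraic c₀).isIntegral
  set e := (minpoly (ZMod p) c₀).natDegree with he
  have h1 : c₀ ^ p ^ e = c₀ := pow_pow_natDegree_minpoly p c₀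
  rw [c0_pow_pow p c₀ h0 e] at h1
  have he0 : ((e : ℕ) : K) = 0 := by linear_combination h1
  have hpe : p ∣ e := (CharP.cast_eq_zero_iff K p e).mp he0
  have hle : e ≤ p := by
    have hdvd : minpoly (ZMod p) c₀ ∣ (X ^ p - X - 1) := by
      apply minpoly.dvd
      simp only [map_sub, map_pow, map_one, aeval_X]
      linear_combination h0
    have := natDegree_le_of_dvd hdvd (AS_ne_zero p)
    rwa [ndeg_AS] at this
  exact le_antisymm hle (Nat.le_of_dvd (minpoly.natDegree_pos hint) hpe)


lemma sum_range_cast {M : Type*} [AddCommMonoid M] (f : ZMod p → M) :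
    ∑ i ∈ Finset.range p, f (i : ZMod p) = ∑ x : ZMod p, f x := by
  have hp2 : 2 ≤ p := (Fact.out : p.Prime).two_le
  haveI : NeZero p := ⟨by omega⟩
  have hinj : ∀ x ∈ Finset.range p, ∀ y ∈ Finset.range p,
      (x : ZMod p) = (y : ZMod p) → x = y := by
    intro a ha b hb hab
    have ha' : a < p := Finset.mem_range.mp ha
    have hb' : b < p := Finset.mem_range.mp hb
    rw [← ZMod.val_cast_of_lt ha', ← ZMod.val_cast_of_lt hb', hab]
  rw [← Finset.sum_image hinj]
  congr 1
  apply Finset.eq_univ_of_forall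
  intro x
  refine Finset.mem_image.mpr ⟨x.val, Finset.mem_range.mpr (ZMod.val_lt x), ?_⟩
  exact ZMod.natCast_rightInverse x

lemma zmod_sum_pow_card_sub_one : ∑ x : ZMod p, x ^ (p - 1) = -1 := by
  have hp2 : 2 ≤ p := (Fact.out : p.Prime).two_le
  classical
  rw [← Finset.sum_erase_add _ _ (Finset.mem_univ (0 : ZMod p)),
    zero_pow (by omega : p - 1 ≠ 0), add_zero,
    Finset.sum_congr rfl
      (fun x hx => ZMod.pow_card_sub_one_eq_one (Finset.ne_of_mem_erase hx)),
    Finset.sum_const, Finset.card_erase_of_mem (Finset.mem_univ _), Finset.card_univ, ZMod.card,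
    nsmul_eq_mul, mul_one, Nat.cast_sub (by omega : 1 ≤ p), ZMod.natCast_self, Nat.cast_one,
    zero_sub]

lemma T_cast (m : ℕ) :
    ∑ i ∈ Finset.range p, ((i : K)) ^ m
      = algebraMap (ZMod p) K (∑ x : ZMod p, x ^ m) := by
  rw [map_sum, ← sum_range_cast p (fun x => algebraMap (ZMod p) K (x ^ m))]
  refine Finset.sum_congr rfl fun i _ => ?_
  rw [map_pow, map_natCast]

lemma T_lt (m : ℕ) (hm : m < p - 1) : ∑ i ∈ Finset.range p, ((i : K)) ^ m = 0 := by
  rw [T_cast, FiniteField.sum_pow_lt_card_sub_one (ZMod p) m (by rwa [ZMod.card]), map_zero]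

lemma T_top : ∑ i ∈ Finset.range p, ((i : K)) ^ (p - 1) = -1 := by
  rw [T_cast, zmod_sum_pow_card_sub_one, map_neg, map_one]

lemma sum_full (c₀ : K) :
    ∑ i ∈ Finset.range p, (c₀ + (i : K)) ^ (p - 1) = -1 := by
  have hp2 : 2 ≤ p := (Fact.out : p.Prime).two_le
  have hb : ∀ i : ℕ, (c₀ + (i : K)) ^ (p - 1)
      = ∑ k ∈ Finset.range p, c₀ ^ k * (i : K) ^ (p - 1 - k) * ((p-1).choose k : K) := by
    intro i
    rw [add_pow, Nat.sub_add_cancel (by omega : 1 ≤ p)]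
  rw [Finset.sum_congr rfl (fun i _ => hb i), Finset.sum_comm]
  have hinner : ∀ k, ∑ i ∈ Finset.range p, c₀ ^ k * (i : K) ^ (p - 1 - k) * ((p-1).choose k : K)
      = c₀ ^ k * (∑ i ∈ Finset.range p, (i : K) ^ (p - 1 - k)) * ((p-1).choose k : K) := by
    intro k
    rw [← Finset.sum_mul, ← Finset.mul_sum]
  rw [Finset.sum_congr rfl (fun k _ => hinner k)]
  rw [Finset.sum_eq_single 0]
  · rw [Nat.sub_zero, T_top, pow_zero, Nat.choose_zero_right, Nat.cast_one, one_mul, mul_one]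
  · intro k hk hk0
    rw [T_lt p (p - 1 - k) (by have := Finset.mem_range.mp hk; omega), mul_zero, zero_mul]
  · intro h
    exact absurd (Finset.mem_range.mpr (by omega)) h


lemma sum_shift (c₀ : K) (k : ℕ) :
    ∑ i ∈ Finset.range (p + k), (c₀ + (i : K)) ^ (p - 1)
      = (∑ i ∈ Finset.range k, (c₀ + (i : K)) ^ (p - 1)) - 1 := by
  rw [Finset.sum_range_add (fun i => (c₀ + (i : K)) ^ (p - 1)) p k, sum_full p c₀]
  have h : ∀ i : ℕ, (c₀ + ((p + i : ℕ) : K)) ^ (p - 1) = (c₀ + (i : K)) ^ (p - 1) := by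
    intro i
    have hcast : ((p + i : ℕ) : K) = (i : K) := by
      push_cast [CharP.cast_eq_zero K p]; ring
    rw [hcast]
  rw [Finset.sum_congr rfl fun i _ => h i]
  ring

lemma sum_blocks (c₀ : K) (m k : ℕ) :
    ∑ i ∈ Finset.range (m * p + k), (c₀ + (i : K)) ^ (p - 1)
      = (∑ i ∈ Finset.range k, (c₀ + (i : K)) ^ (p - 1)) - m := by
  induction m with
  | zero => simp
  | succ m ih =>
    have h : (m + 1) * p + k = p + (m * p + k) := by ring
    rw [h, sum_shift p c₀ (m * p + k), ih]
    push_cast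
    ring

lemma sum_partial_ne (c₀ : K) (h0 : c₀ ^ p - c₀ = 1) (r : ℕ) (hr0 : r ≠ 0) (hrp : r < p)
    (m : ℕ) : ∑ i ∈ Finset.range r, (c₀ + (i : K)) ^ (p - 1) ≠ (m : K) := by
  have hp2 : 2 ≤ p := (Fact.out : p.Prime).two_le
  intro heq
  set g : (ZMod p)[X] :=
    (∑ i ∈ Finset.range r, (X + C (i : ZMod p)) ^ (p - 1)) - C (m : ZMod p) with hg
  have haev : aeval c₀ g = 0 := by
    rw [hg, map_sub, map_sum]
    have h : ∀ i ∈ Finset.range r, aeval c₀ ((X + C (i : ZMod p)) ^ (p - 1))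
        = (c₀ + (i : K)) ^ (p - 1) := by
      intro i _
      rw [map_pow, map_add, aeval_X, aeval_C, map_natCast]
    rw [Finset.sum_congr rfl h, heq, aeval_C, map_natCast, sub_self]
  have hcoeff : g.coeff (p - 1) = (r : ZMod p) := by
    rw [hg, coeff_sub, finset_sum_coeff]
    have hterm : ∀ i ∈ Finset.range r, ((X + C (i : ZMod p)) ^ (p - 1)).coeff (p - 1) = 1 := by
      intro i _
      have hmo : ((X + C (i : ZMod p)) ^ (p - 1)).Monic := (monic_X_add_C _).pow _
      have hd : ((X + C (i : ZMod p)) ^ (p - 1)).natDegree = p - 1 := by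
        rw [(monic_X_add_C _).natDegree_pow, natDegree_X_add_C, mul_one]
      have hc := hmo.coeff_natDegree
      rwa [hd] at hc
    rw [Finset.sum_congr rfl hterm, Finset.sum_const, Finset.card_range, nsmul_eq_mul, mul_one,
      coeff_C, if_neg (by omega : ¬(p - 1 = 0)), sub_zero]
  have hg0 : g ≠ 0 := by
    intro h
    rw [h, coeff_zero] at hcoeff
    have hdvd := (ZMod.natCast_eq_zero_iff r p).mp hcoeff.symm
    have := Nat.le_of_dvd (Nat.pos_of_ne_zero hr0) hdvd
    omega
  have hdeg : (minpoly (ZMod p) c₀).degree ≤ g.degree :=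
    minpoly.degree_le_of_ne_zero (ZMod p) c₀ hg0 haev
  have hdg : g.natDegree ≤ p - 1 := by
    apply le_trans (natDegree_sub_le _ _)
    simp only [max_le_iff]
    constructor
    · apply natDegree_sum_le_of_forall_le
      intro i _
      rw [(monic_X_add_C _).natDegree_pow, natDegree_X_add_C, mul_one]
    · rw [natDegree_C]; omega
  have hple : p ≤ g.natDegree := by
    have h := natDegree_le_natDegree hdeg
    rwa [minpoly_c0_natDegree p c₀ h0] at h
  omega

lemma c1_pow_pow (c₀ c₁ : K) (h0 : c₀ ^ p - c₀ = 1) (h1 : c₁ ^ p - c₁ = c₀ ^ (p - 1)) (k : ℕ) :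
    c₁ ^ p ^ k = c₁ + ∑ i ∈ Finset.range k, (c₀ + (i : K)) ^ (p - 1) := by
  induction k with
  | zero => simp
  | succ k ih =>
    have hc1p : c₁ ^ p = c₁ + c₀ ^ (p - 1) := by linear_combination h1
    have hshift : ∀ i : ℕ,
        ((c₀ + (i : K)) ^ (p - 1)) ^ p = (c₀ + ((i + 1 : ℕ) : K)) ^ (p - 1) := by
      intro i
      rw [← pow_mul, mul_comm, pow_mul, add_pow_char, c0_pow p c₀ h0, natCast_pow_card]
      push_cast
      ring_nf
    have hSp : (∑ i ∈ Finset.range k, (c₀ + (i : K)) ^ (p - 1)) ^ p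
        = ∑ i ∈ Finset.range k, (c₀ + ((i + 1 : ℕ) : K)) ^ (p - 1) := by
      rw [show (∑ i ∈ Finset.range k, (c₀ + (i : K)) ^ (p - 1)) ^ p
          = frobenius K p (∑ i ∈ Finset.range k, (c₀ + (i : K)) ^ (p - 1)) from rfl, map_sum]
      exact Finset.sum_congr rfl fun i _ => hshift i
    rw [pow_succ, pow_mul, ih, add_pow_char, hc1p, hSp, Finset.sum_range_succ']
    push_cast
    ring

end aux

theorem minpoly_c_one (p : ℕ) [Fact p.Prime]
    (c₀ c₁ : AlgebraicClosure (ZMod p))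
    (h0 : c₀ ^ p - c₀ = 1) (h1 : c₁ ^ p - c₁ = c₀ ^ (p - 1)) :
    minpoly (ZMod p) c₁ =
      X ^ p ^ 2 + (X ^ p - X - 1) ^ (p - 1) - X ^ p - C 2 ∧
    Irreducible
      (X ^ p ^ 2 + (X ^ p - X - 1) ^ (p - 1) - X ^ p - C 2 : (ZMod p)[X]) := by
  have hp : p.Prime := Fact.out
  have hp2 : 2 ≤ p := hp.two_le
  set P : (ZMod p)[X] := X ^ p ^ 2 + (X ^ p - X - 1) ^ (p - 1) - X ^ p - C 2 with hPdef
  have hQ : P = X ^ p ^ 2 + ((X ^ p - X - 1) ^ (p - 1) - X ^ p - C 2) := by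
    rw [hPdef]; ring
  have hb1 : ((X ^ p - X - 1 : (ZMod p)[X]) ^ (p - 1)).natDegree ≤ (p - 1) * p := by
    calc ((X ^ p - X - 1 : (ZMod p)[X]) ^ (p - 1)).natDegree
        ≤ (p - 1) * (X ^ p - X - 1 : (ZMod p)[X]).natDegree := natDegree_pow_le
      _ = (p - 1) * p := by rw [ndeg_AS p]
  have hb1' : (p - 1) * p = p * p - p := by rw [Nat.sub_mul, one_mul]
  have hpp : 2 * p ≤ p * p := Nat.mul_le_mul_right p hp2
  have hQnat : ((X ^ p - X - 1 : (ZMod p)[X]) ^ (p - 1) - X ^ p - C 2).natDegree ≤ p * p - 1 := by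
    apply le_trans (natDegree_sub_le _ _)
    rw [max_le_iff]
    constructor
    · apply le_trans (natDegree_sub_le _ _)
      rw [max_le_iff]
      constructor
      · omega
      · rw [natDegree_X_pow]; omega
    · rw [natDegree_C]; omega
  have hQdeg : ((X ^ p - X - 1 : (ZMod p)[X]) ^ (p - 1) - X ^ p - C 2).degree
      < ((p ^ 2 : ℕ) : WithBot ℕ) := by
    apply lt_of_le_of_lt degree_le_natDegree
    have hlt : ((X ^ p - X - 1 : (ZMod p)[X]) ^ (p - 1) - X ^ p - C 2).natDegree < p ^ 2 := by
      rw [pow_two]; omega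
    exact_mod_cast hlt
  have hPm : P.Monic := by
    rw [hQ]
    exact monic_X_pow_add hQdeg
  have hPdeg : P.natDegree = p ^ 2 := by
    have hd : P.degree = (p ^ 2 : ℕ) := by
      rw [hQ, degree_add_eq_left_of_degree_lt (by rw [degree_X_pow]; exact hQdeg), degree_X_pow]
    exact natDegree_eq_of_degree_eq_some hd
  -- field computations
  have hc0p : c₀ ^ p = c₀ + 1 := c0_pow p c₀ h0
  have hc01ne : c₀ + 1 ≠ 0 := by
    intro h
    have h2 : (c₀ + 1) ^ p - (c₀ + 1) = 1 := by
      rw [add_pow_char, hc0p, one_pow]; ring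
    rw [h, zero_pow (by omega : p ≠ 0), sub_zero] at h2
    exact zero_ne_one h2
  have ha : c₀ ^ (p - 1) * c₀ = c₀ + 1 := by
    rw [← pow_succ, Nat.sub_add_cancel (by omega : 1 ≤ p)]; exact hc0p
  have hbid : (c₀ + 1) ^ (p - 1) * (c₀ + 1) = c₀ + 2 := by
    rw [← pow_succ, Nat.sub_add_cancel (by omega : 1 ≤ p), add_pow_char, hc0p, one_pow]; ring
  have hu : (c₀ ^ (p - 1) - 1) * c₀ = 1 := by linear_combination ha
  have hv : (c₀ ^ (p - 1) - 1) ^ (p - 1) * (c₀ + 1) = c₀ := by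
    have h2 : (c₀ ^ (p - 1) - 1) ^ (p - 1) * c₀ ^ (p - 1) = 1 := by
      rw [← mul_pow, hu, one_pow]
    calc (c₀ ^ (p - 1) - 1) ^ (p - 1) * (c₀ + 1)
        = (c₀ ^ (p - 1) - 1) ^ (p - 1) * (c₀ ^ (p - 1) * c₀) := by rw [ha]
      _ = ((c₀ ^ (p - 1) - 1) ^ (p - 1) * c₀ ^ (p - 1)) * c₀ := by ring
      _ = c₀ := by rw [h2, one_mul]
  have hc1p : c₁ ^ p = c₁ + c₀ ^ (p - 1) := by linear_combination h1
  have hc1pp : c₁ ^ p ^ 2 = c₁ + c₀ ^ (p - 1) + (c₀ + 1) ^ (p - 1) := by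
    have hfr : (c₀ ^ (p - 1)) ^ p = (c₀ + 1) ^ (p - 1) := by
      rw [← pow_mul, mul_comm, pow_mul, hc0p]
    rw [pow_two, pow_mul, hc1p, add_pow_char, hc1p, hfr]
  have haevP : aeval c₁ P = c₁ ^ p ^ 2 + (c₁ ^ p - c₁ - 1) ^ (p - 1) - c₁ ^ p - 2 := by
    rw [hPdef]
    simp only [map_sub, map_add, map_pow, aeval_X, map_one, aeval_C, map_ofNat]
  have haev0 : aeval c₁ P = 0 := by
    rw [haevP, hc1pp, hc1p]
    have hsimp : c₁ + c₀ ^ (p - 1) - c₁ - 1 = c₀ ^ (p - 1) - 1 := by ring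
    rw [hsimp]
    have key : ((c₀ + 1) ^ (p - 1) + (c₀ ^ (p - 1) - 1) ^ (p - 1) - 2) * (c₀ + 1) = 0 := by
      rw [sub_mul, add_mul, hbid, hv]; ring
    have h2 := (mul_eq_zero.mp key).resolve_right hc01ne
    linear_combination h2
  -- minpoly divides P
  have hint : IsIntegral (ZMod p) c₁ := (Algebra.IsAlgebraic.isAlgebraic c₁).isIntegral
  have hdvd : minpoly (ZMod p) c₁ ∣ P := minpoly.dvd _ _ haev0
  set d := (minpoly (ZMod p) c₁).natDegree with hd
  have hdle : d ≤ p ^ 2 := by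
    have := natDegree_le_of_dvd hdvd hPm.ne_zero
    rwa [hPdeg] at this
  have hd0 : 0 < d := minpoly.natDegree_pos hint
  have hSd : (∑ i ∈ Finset.range (d % p), (c₀ + (i : AlgebraicClosure (ZMod p))) ^ (p - 1))
      - ((d / p : ℕ) : AlgebraicClosure (ZMod p)) = 0 := by
    have h := c1_pow_pow p c₀ c₁ h0 h1 d
    rw [pow_pow_natDegree_minpoly p c₁] at h
    have hdecomp : d = d / p * p + d % p := (Nat.div_add_mod' d p).symm
    rw [hdecomp, sum_blocks p c₀ (d / p) (d % p)] at h
    linear_combination -h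
  have hfin : d = p ^ 2 := by
    by_cases hr : d % p = 0
    · rw [hr] at hSd
      simp only [Finset.range_zero, Finset.sum_empty, zero_sub, neg_eq_zero] at hSd
      have hq : p ∣ d / p := (CharP.cast_eq_zero_iff (AlgebraicClosure (ZMod p)) p _).mp hSd
      obtain ⟨t, ht⟩ := hq
      have hdeq : d = p * t * p := by
        have hdecomp : d = d / p * p + d % p := (Nat.div_add_mod' d p).symm
        rw [hdecomp, hr, ht, add_zero]
      have ht1 : 1 ≤ t := by
        rcases Nat.eq_zero_or_pos t with h | h
        · rw [h, mul_zero, zero_mul] at hdeq; omega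
        · exact h
      have hge : p ^ 2 ≤ d := by
        rw [pow_two, hdeq]
        calc p * p = p * 1 * p := by ring
          _ ≤ p * t * p := by
              apply Nat.mul_le_mul_right
              exact Nat.mul_le_mul_left _ ht1
      exact le_antisymm hdle hge
    · exfalso
      refine sum_partial_ne p c₀ h0 (d % p) hr (Nat.mod_lt d (by omega)) (d / p) ?_
      linear_combination hSd
  have hmin : minpoly (ZMod p) c₁ = P := by
    apply eq_of_dvd_of_natDegree_le_of_leadingCoeff hdvd
    · rw [hPdeg, ← hd, hfin]
    · rw [(minpoly.monic hint).leadingCoeff, hPm.leadingCoeff]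
  exact ⟨hmin, hmin ▸ minpoly.irreducible hint⟩
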